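/- Let Q_1 = C_1 D_1 be a k_1-sparse factorization of Q_1 ∈ ℝ^{m_1×n} and Q_2 = C_2 D_2 a k_2-sparse factorization of Q_2 ∈ ℝ^{m_2×n}. Form the block matrices C = diag(C_1, C_2) (block diagonal, with the columns of C_1 preceding those of C_2) and D = [D_1 ; D_2] (vertical stacking). Then [Q_1 ; Q_2] = CD and this factorization is (k_1 + k_2)-sparse: for every column d_j of D, |⋃_{i ∈ supp(d_j)} FO(c_i)| ≤ k_1 + k_2, where the forward overlaps are computed with respect to the column ordering of C. -/

import Mathlib

/-!
A column of `C₁` and a column of `C₂` have disjoint supports in `diag(C₁, C₂)`, and the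
column order is preserved inside each block, so the forward overlap of a column of
`diag(C₁, C₂)` is a copy of its forward overlap in `C₁` or in `C₂`. Hence the union over
`supp(d_j)` is a copy of the corresponding union for `D₁` next to a copy of the one for `D₂`.
-/
open Matrix Finset

/-- The support of a vector: the set of indices of its nonzero entries. -/
noncomputable def vsupp {α : Type*} [Fintype α] (v : α → ℝ) : Finset α := by
  classical exact Finset.univ.filter fun i => v i ≠ 0

/-- The forward overlap `FO(cᵢ)` of the `i`-th column of `C`: the set of column
indices `j ≥ i` whose support overlaps the support of column `i`. -/
noncomputable def FO {α β : Type*} [Fintype α] [Fintype β] [LinearOrder β]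
    (C : Matrix α β ℝ) (i : β) : Finset β := by
  classical
  exact Finset.univ.filter fun j =>
    i ≤ j ∧ ((vsupp fun r => C r i) ∩ (vsupp fun r => C r j)).Nonempty

/-- `Q = CD` is a `k`-sparse factorization: every column of `C` and every row of
`D` is nonzero, and for every column `d_j` of `D`,
`|⋃_{i ∈ supp(d_j)} FO(c_i)| ≤ k`. -/
noncomputable def IsSparseFactorization {α β γ : Type*}
    [Fintype α] [Fintype β] [Fintype γ] [LinearOrder γ]
    (Q : Matrix α β ℝ) (C : Matrix α γ ℝ) (D : Matrix γ β ℝ) (k : ℕ) : Prop := by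
  classical
  exact Q = C * D ∧
    (∀ i : γ, (fun r => C r i) ≠ (0 : α → ℝ)) ∧
    (∀ i : γ, (fun j => D i j) ≠ (0 : β → ℝ)) ∧
    ∀ j : β, ((vsupp fun i => D i j).biUnion fun i => FO C i).card ≤ k

lemma mem_vsupp {α : Type*} [Fintype α] {v : α → ℝ} {i : α} :
    i ∈ vsupp v ↔ v i ≠ 0 := by
  simp [vsupp]

lemma mem_FO {α β : Type*} [Fintype α] [Fintype β] [LinearOrder β]
    {C : Matrix α β ℝ} {i j : β} :
    j ∈ FO C i ↔ i ≤ j ∧ ∃ r, C r i ≠ 0 ∧ C r j ≠ 0 := by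
  simp only [FO, mem_filter, mem_univ, true_and, Finset.Nonempty, mem_inter, mem_vsupp]

lemma Fin.castAdd_lt_natAdd {m n : ℕ} (a : Fin m) (b : Fin n) :
    Fin.castAdd n a < Fin.natAdd m b := by
  simp only [Fin.lt_def, Fin.val_castAdd, Fin.val_natAdd]
  omega

section Append

variable {α₁ α₂ β : Type*} {p₁ p₂ : ℕ}

/-- `diag(C₁, C₂)` with the columns indexed by `Fin (p₁ + p₂)`, those of `C₁` first. -/
def blockDiagAppend (C₁ : Matrix α₁ (Fin p₁) ℝ) (C₂ : Matrix α₂ (Fin p₂) ℝ) :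
    Matrix (α₁ ⊕ α₂) (Fin (p₁ + p₂)) ℝ :=
  (fromBlocks C₁ 0 0 C₂).submatrix id finSumFinEquiv.symm

def rowsAppend (D₁ : Matrix (Fin p₁) β ℝ) (D₂ : Matrix (Fin p₂) β ℝ) :
    Matrix (Fin (p₁ + p₂)) β ℝ :=
  (fromRows D₁ D₂).submatrix finSumFinEquiv.symm id

variable (C₁ : Matrix α₁ (Fin p₁) ℝ) (C₂ : Matrix α₂ (Fin p₂) ℝ)

@[simp]
lemma blockDiagAppend_inl_castAdd (r : α₁) (a : Fin p₁) :
    blockDiagAppend C₁ C₂ (Sum.inl r) (Fin.castAdd p₂ a) = C₁ r a := by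
  simp [blockDiagAppend]

@[simp]
lemma blockDiagAppend_inr_castAdd (r : α₂) (a : Fin p₁) :
    blockDiagAppend C₁ C₂ (Sum.inr r) (Fin.castAdd p₂ a) = 0 := by
  simp [blockDiagAppend]

@[simp]
lemma blockDiagAppend_inl_natAdd (r : α₁) (b : Fin p₂) :
    blockDiagAppend C₁ C₂ (Sum.inl r) (Fin.natAdd p₁ b) = 0 := by
  simp [blockDiagAppend]

@[simp]
lemma blockDiagAppend_inr_natAdd (r : α₂) (b : Fin p₂) :
    blockDiagAppend C₁ C₂ (Sum.inr r) (Fin.natAdd p₁ b) = C₂ r b := by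
  simp [blockDiagAppend]

@[simp]
lemma rowsAppend_castAdd (D₁ : Matrix (Fin p₁) β ℝ) (D₂ : Matrix (Fin p₂) β ℝ)
    (a : Fin p₁) (j : β) : rowsAppend D₁ D₂ (Fin.castAdd p₂ a) j = D₁ a j := by
  simp [rowsAppend]

@[simp]
lemma rowsAppend_natAdd (D₁ : Matrix (Fin p₁) β ℝ) (D₂ : Matrix (Fin p₂) β ℝ)
    (b : Fin p₂) (j : β) : rowsAppend D₁ D₂ (Fin.natAdd p₁ b) j = D₂ b j := by
  simp [rowsAppend]

lemma blockDiagAppend_mul_rowsAppend (D₁ : Matrix (Fin p₁) β ℝ) (D₂ : Matrix (Fin p₂) β ℝ) :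
    blockDiagAppend C₁ C₂ * rowsAppend D₁ D₂ = fromRows (C₁ * D₁) (C₂ * D₂) := by
  rw [blockDiagAppend, rowsAppend, submatrix_mul_equiv, submatrix_id_id,
    fromBlocks_mul_fromRows]
  simp

variable [Fintype α₁] [Fintype α₂]

lemma FO_blockDiagAppend_castAdd (a : Fin p₁) :
    FO (blockDiagAppend C₁ C₂) (Fin.castAdd p₂ a) = (FO C₁ a).image (Fin.castAdd p₂) := by
  ext j
  induction j using Fin.addCases with
  | left b =>
    simp [mem_FO, (Fin.castAdd_injective p₁ p₂).mem_finset_image,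
      (Fin.strictMono_castAdd p₂).le_iff_le]
  | right b =>
    simp [mem_FO, fun x => (Fin.castAdd_lt_natAdd x b).ne]

lemma FO_blockDiagAppend_natAdd (b : Fin p₂) :
    FO (blockDiagAppend C₁ C₂) (Fin.natAdd p₁ b) = (FO C₂ b).image (Fin.natAdd p₁) := by
  ext j
  induction j using Fin.addCases with
  | left a =>
    simp [mem_FO, (Fin.castAdd_lt_natAdd a b).not_ge, fun x => (Fin.castAdd_lt_natAdd a x).ne']
  | right a =>
    simp [mem_FO, (Fin.natAdd_injective p₂ p₁).mem_finset_image]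

variable {C₁ C₂} (D₁ : Matrix (Fin p₁) β ℝ) (D₂ : Matrix (Fin p₂) β ℝ) (j : β)

lemma vsupp_rowsAppend :
    (vsupp fun i => rowsAppend D₁ D₂ i j) =
      (vsupp fun i => D₁ i j).image (Fin.castAdd p₂) ∪
        (vsupp fun i => D₂ i j).image (Fin.natAdd p₁) := by
  ext i
  induction i using Fin.addCases with
  | left a =>
    simp [mem_vsupp, (Fin.castAdd_injective p₁ p₂).mem_finset_image,
      fun x => (Fin.castAdd_lt_natAdd a x).ne']
  | right b =>
    simp [mem_vsupp, (Fin.natAdd_injective p₂ p₁).mem_finset_image,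
      fun x => (Fin.castAdd_lt_natAdd x b).ne]

lemma biUnion_FO_blockDiagAppend :
    (vsupp fun i => rowsAppend D₁ D₂ i j).biUnion (FO (blockDiagAppend C₁ C₂)) =
      ((vsupp fun i => D₁ i j).biUnion (FO C₁)).image (Fin.castAdd p₂) ∪
        ((vsupp fun i => D₂ i j).biUnion (FO C₂)).image (Fin.natAdd p₁) := by
  simp only [vsupp_rowsAppend, union_biUnion, image_biUnion, FO_blockDiagAppend_castAdd,
    FO_blockDiagAppend_natAdd, biUnion_image]

end Append

/-- Let `Q₁ = C₁D₁` be a `k₁`-sparse factorization of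
`Q₁ ∈ ℝ^{m₁×n}` and `Q₂ = C₂D₂` a `k₂`-sparse factorization of `Q₂ ∈ ℝ^{m₂×n}`.
Form `C = diag(C₁, C₂)` (block diagonal, the columns of `C₁` preceding those of
`C₂`, realized by reindexing the column sum type along `finSumFinEquiv`) and
`D = [D₁ ; D₂]` (vertical stacking). Then `[Q₁ ; Q₂] = CD` and this
factorization is `(k₁ + k₂)`-sparse: for every column `d_j` of `D`,
`|⋃_{i ∈ supp(d_j)} FO(c_i)| ≤ k₁ + k₂`, the forward overlaps being computed
with respect to the column ordering of `C`. -/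
theorem stmt10 {m₁ m₂ n p₁ p₂ : ℕ}
    (Q₁ : Matrix (Fin m₁) (Fin n) ℝ) (C₁ : Matrix (Fin m₁) (Fin p₁) ℝ)
    (D₁ : Matrix (Fin p₁) (Fin n) ℝ)
    (Q₂ : Matrix (Fin m₂) (Fin n) ℝ) (C₂ : Matrix (Fin m₂) (Fin p₂) ℝ)
    (D₂ : Matrix (Fin p₂) (Fin n) ℝ)
    (k₁ k₂ : ℕ)
    (h₁ : IsSparseFactorization Q₁ C₁ D₁ k₁)
    (h₂ : IsSparseFactorization Q₂ C₂ D₂ k₂)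
    (C : Matrix (Fin m₁ ⊕ Fin m₂) (Fin (p₁ + p₂)) ℝ)
    (hC : C = (Matrix.fromBlocks C₁ 0 0 C₂).submatrix id ⇑finSumFinEquiv.symm)
    (D : Matrix (Fin (p₁ + p₂)) (Fin n) ℝ)
    (hD : D = (Matrix.fromRows D₁ D₂).submatrix ⇑finSumFinEquiv.symm id) :
    Matrix.fromRows Q₁ Q₂ = C * D ∧
    ∀ j : Fin n, ((vsupp fun i => D i j).biUnion fun i => FO C i).card ≤ k₁ + k₂ := by
  obtain rfl : C = blockDiagAppend C₁ C₂ := hC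
  obtain rfl : D = rowsAppend D₁ D₂ := hD
  obtain ⟨rfl, -, -, hk₁⟩ := h₁
  obtain ⟨rfl, -, -, hk₂⟩ := h₂
  refine ⟨(blockDiagAppend_mul_rowsAppend C₁ C₂ D₁ D₂).symm, fun j => ?_⟩
  calc _ ≤ ((vsupp fun i => D₁ i j).biUnion (FO C₁)).card +
        ((vsupp fun i => D₂ i j).biUnion (FO C₂)).card := by
        rw [biUnion_FO_blockDiagAppend,
          ← card_image_of_injective _ (Fin.castAdd_injective p₁ p₂),
          ← card_image_of_injective _ (Fin.natAdd_injective p₂ p₁)]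
        exact card_union_le _ _
    _ ≤ k₁ + k₂ := add_le_add (hk₁ j) (hk₂ j)
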